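/- If the empirical frequency ν((X₁,…,Xₙ), Bᵢ) converges to ρ_X(Bᵢ) for every i (and similarly ν((Y₁,…,Y_m), Bᵢ) → ρ_Y(Bᵢ)), then d̂(X,Y) → d(ρ_X,ρ_Y) as n,m → ∞. In particular, for samples X and Y generated independently by stationary ergodic processes ρ_X and ρ_Y, d̂((X₁,…,X_k),(Y₁,…,Y_m)) → d(ρ_X,ρ_Y) almost surely as k,m → ∞. -/

import Mathlib

/-!
Each term `wᵢ |ν(X, Bᵢ) - ν(Y, Bᵢ)|` converges by hypothesis and is dominated by `2 wᵢ`, so the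
first part is dominated convergence for series. For the second, `ν(X, B)` is a Birkhoff average of
the indicator of `B` along the shift, so it suffices to have Birkhoff's pointwise ergodic theorem
for bounded observables. Its upper half comes from the maximal ergodic lemma (Garsia's argument):
`limsup` of the averages is shift-invariant, hence a.e. equal to a constant `c` by ergodicity, and
if `a < c` then a.e. some Birkhoff sum of `g - a` is positive, which forces `a ≤ ∫ g`. The lower
half is the upper half for `-g`. Countably many cylinders and the two marginals of `μX.prod μY`
then give the almost sure statement.
-/

open MeasureTheory Filter Topology

/-- Empirical sliding-window frequency of the (cylinder) set `S` of dimension `l`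
in the sample given by the first `n` values of `X`. -/
noncomputable def nu (n : ℕ) (X : ℕ → ℝ) (l : ℕ) (S : Set (ℕ → ℝ)) : ℝ :=
  if l ≤ n ∧ 1 ≤ l then
    (∑ i ∈ Finset.range (n - l + 1),
      S.indicator (fun _ => (1 : ℝ)) (fun j => X (i + j))) / (n - l + 1)
  else 0

/-- A finite-dimensional cylinder with rational endpoints. -/
structure Cylinder where
  dim : ℕ
  dimPos : 0 < dim
  a : Fin dim → ℚ
  b : Fin dim → ℚ

/-- The subset of `ℕ → ℝ` determined by a cylinder (it constrains the first `dim`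
coordinates to lie in the corresponding rational-endpoint intervals). -/
def Cylinder.set (C : Cylinder) : Set (ℕ → ℝ) :=
  {x | ∀ j : Fin C.dim, (C.a j : ℝ) ≤ x j.val ∧ x j.val ≤ (C.b j : ℝ)}

/-- Distributional distance between two process measures. -/
noncomputable def dd (w : ℕ → ℝ) (B : ℕ → Cylinder) (μ ν : Measure (ℕ → ℝ)) : ℝ :=
  ∑' i, w i * |(μ (B i).set).toReal - (ν (B i).set).toReal|

/-- Empirical distributional distance between two finite samples. -/
noncomputable def dhat (w : ℕ → ℝ) (B : ℕ → Cylinder)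
    (n : ℕ) (X : ℕ → ℝ) (m : ℕ) (Y : ℕ → ℝ) : ℝ :=
  ∑' i, w i * |nu n X (B i).dim (B i).set - nu m Y (B i).dim (B i).set|

/-- One-sample empirical distributional distance to a known process measure. -/
noncomputable def dhat1 (w : ℕ → ℝ) (B : ℕ → Cylinder)
    (n : ℕ) (X : ℕ → ℝ) (ρ : Measure (ℕ → ℝ)) : ℝ :=
  ∑' i, w i * |nu n X (B i).dim (B i).set - (ρ (B i).set).toReal|

/-- The left shift on `ℕ → ℝ`. -/
def shift : (ℕ → ℝ) → (ℕ → ℝ) := fun x n => x (n + 1)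

/-- Concatenation of a word of length `k` with another word. -/
def conc (k : ℕ) (x y : ℕ → ℝ) : ℕ → ℝ := fun i => if i < k then x i else y (i - k)

open Set

theorem limsup_le_limsup_of_tendsto_sub {u v : ℕ → ℝ} (hv : IsBoundedUnder (· ≤ ·) atTop v)
    (hv' : IsBoundedUnder (· ≥ ·) atTop v) (h : Tendsto (u - v) atTop (𝓝 0)) :
    limsup u atTop ≤ limsup v atTop := by
  calc limsup u atTop = limsup (v + (u - v)) atTop := by rw [add_sub_cancel]
    _ ≤ limsup v atTop + limsup (u - v) atTop :=
      limsup_add_le hv' hv h.isBoundedUnder_ge.isCoboundedUnder_le h.isBoundedUnder_le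
    _ = limsup v atTop := by rw [h.limsup_eq, add_zero]

theorem limsup_eq_limsup_of_tendsto_sub {u v : ℕ → ℝ} {C : ℝ} (hu : ∀ n, |u n| ≤ C)
    (hv : ∀ n, |v n| ≤ C) (h : Tendsto (u - v) atTop (𝓝 0)) :
    limsup u atTop = limsup v atTop := by
  have bdd {w : ℕ → ℝ} (hw : ∀ n, |w n| ≤ C) :
      IsBoundedUnder (· ≤ ·) atTop w ∧ IsBoundedUnder (· ≥ ·) atTop w :=
    ⟨isBoundedUnder_of ⟨C, fun n => (abs_le.1 (hw n)).2⟩,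
      isBoundedUnder_of ⟨-C, fun n => (abs_le.1 (hw n)).1⟩⟩
  refine le_antisymm (limsup_le_limsup_of_tendsto_sub (bdd hv).1 (bdd hv).2 h)
    (limsup_le_limsup_of_tendsto_sub (bdd hu).1 (bdd hu).2 ?_)
  convert h.neg using 2 <;> simp

section MaximalErgodic

variable {α : Type*} {f : α → α} {g : α → ℝ}

def maxBirkhoffSum (f : α → α) (g : α → ℝ) : ℕ → α → ℝ
  | 0 => 0
  | n + 1 => maxBirkhoffSum f g n ⊔ birkhoffSum f g (n + 1)

theorem maxBirkhoffSum_succ_apply (n : ℕ) (x : α) :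
    maxBirkhoffSum f g (n + 1) x = max (maxBirkhoffSum f g n x) (birkhoffSum f g (n + 1) x) :=
  rfl

theorem maxBirkhoffSum_nonneg (n : ℕ) (x : α) : 0 ≤ maxBirkhoffSum f g n x := by
  induction n with
  | zero => rfl
  | succ n ih => exact ih.trans (le_max_left _ _)

theorem monotone_maxBirkhoffSum (x : α) : Monotone (maxBirkhoffSum f g · x) :=
  monotone_nat_of_le_succ fun _ => le_max_left _ _

theorem birkhoffSum_le_maxBirkhoffSum (n : ℕ) (x : α) :
    birkhoffSum f g n x ≤ maxBirkhoffSum f g n x := by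
  cases n with
  | zero => simp [maxBirkhoffSum]
  | succ n => exact le_max_right _ _

theorem maxBirkhoffSum_succ_eq_max (n : ℕ) (x : α) :
    maxBirkhoffSum f g (n + 1) x = max 0 (g x + maxBirkhoffSum f g n (f x)) := by
  induction n generalizing x with
  | zero => simp [maxBirkhoffSum, max_comm]
  | succ n ih =>
    rw [maxBirkhoffSum_succ_apply, ih, birkhoffSum_succ', maxBirkhoffSum_succ_apply,
      ← max_add_add_left, max_assoc]

theorem maxBirkhoffSum_le_add_apply {n : ℕ} {x : α} (hx : 0 < maxBirkhoffSum f g n x) :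
    maxBirkhoffSum f g n x ≤ g x + maxBirkhoffSum f g n (f x) := by
  cases n with
  | zero => exact absurd hx (lt_irrefl 0)
  | succ n =>
    rw [maxBirkhoffSum_succ_eq_max] at hx ⊢
    rw [max_eq_right (lt_max_iff.1 hx |>.resolve_left (lt_irrefl 0)).le]
    gcongr
    exact monotone_maxBirkhoffSum (f x) n.le_succ

variable [MeasurableSpace α] {μ : Measure α}

theorem measurable_birkhoffSum (hf : Measurable f) (hg : Measurable g) (n : ℕ) :
    Measurable (birkhoffSum f g n) :=
  Finset.measurable_sum _ fun k _ => hg.comp (hf.iterate k)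

theorem measurable_maxBirkhoffSum (hf : Measurable f) (hg : Measurable g) (n : ℕ) :
    Measurable (maxBirkhoffSum f g n) := by
  induction n with
  | zero => exact measurable_const
  | succ n ih => exact ih.sup (measurable_birkhoffSum hf hg _)

theorem integrable_birkhoffSum (hf : MeasurePreserving f μ μ) (hg : Integrable g μ) (n : ℕ) :
    Integrable (birkhoffSum f g n) μ :=
  integrable_finsetSum _ fun k _ => (hf.iterate k).integrable_comp_of_integrable hg

theorem integrable_maxBirkhoffSum (hf : MeasurePreserving f μ μ) (hg : Integrable g μ) (n : ℕ) :
    Integrable (maxBirkhoffSum f g n) μ := by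
  induction n with
  | zero => exact integrable_zero _ _ _
  | succ n ih => exact ih.sup (integrable_birkhoffSum hf hg _)

theorem setIntegral_nonneg_of_maxBirkhoffSum_pos (hf : MeasurePreserving f μ μ)
    (hg : Measurable g) (hgi : Integrable g μ) (n : ℕ) :
    0 ≤ ∫ x in {x | 0 < maxBirkhoffSum f g n x}, g x ∂μ := by
  set M := maxBirkhoffSum f g n
  set A := {x | 0 < M x}
  have hMm : Measurable M := measurable_maxBirkhoffSum hf.measurable hg n
  have hA : MeasurableSet A := measurableSet_lt measurable_const hMm
  have hMi : Integrable M μ := integrable_maxBirkhoffSum hf hgi n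
  have hMfi : Integrable (M ∘ f) μ := hf.integrable_comp_of_integrable hMi
  have hMf : ∫ x, M (f x) ∂μ = ∫ x, M x ∂μ := by
    rw [← integral_map hf.measurable.aemeasurable hMm.aestronglyMeasurable, hf.map_eq]
  -- `M` vanishes off `A` and `M ∘ f` is nonnegative, so both integrals over `A` compare to
  -- the full integrals, which agree because `f` preserves `μ`.
  have hMA : ∫ x in A, M x ∂μ = ∫ x, M x ∂μ := by
    refine setIntegral_eq_integral_of_forall_compl_eq_zero fun x hx => ?_
    exact le_antisymm (not_lt.1 hx) (maxBirkhoffSum_nonneg n x)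
  calc (0 : ℝ) = ∫ x, M x ∂μ - ∫ x, M (f x) ∂μ := by rw [hMf, sub_self]
    _ ≤ ∫ x in A, M x ∂μ - ∫ x in A, M (f x) ∂μ := by
      rw [hMA]
      exact sub_le_sub_left
        (setIntegral_le_integral hMfi (ae_of_all _ fun x => maxBirkhoffSum_nonneg n (f x))) _
    _ = ∫ x in A, (M x - M (f x)) ∂μ := (integral_sub hMi.integrableOn hMfi.integrableOn).symm
    _ ≤ ∫ x in A, g x ∂μ := by
      refine setIntegral_mono_on (hMi.sub hMfi).integrableOn hgi.integrableOn hA fun x hx => ?_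
      linarith [maxBirkhoffSum_le_add_apply (f := f) (g := g) hx]

theorem setIntegral_iUnion_nonneg_of_maxBirkhoffSum_pos (hf : MeasurePreserving f μ μ)
    (hg : Measurable g) (hgi : Integrable g μ) :
    0 ≤ ∫ x in ⋃ n, {x | 0 < maxBirkhoffSum f g n x}, g x ∂μ := by
  refine ge_of_tendsto (tendsto_setIntegral_of_monotone ?_ ?_ hgi.integrableOn)
    (Eventually.of_forall (setIntegral_nonneg_of_maxBirkhoffSum_pos hf hg hgi))
  · exact fun n => measurableSet_lt measurable_const (measurable_maxBirkhoffSum hf.measurable hg n)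
  · exact fun m n hmn x hx => hx.trans_le (monotone_maxBirkhoffSum x hmn)

theorem integral_nonneg_of_ae_exists_birkhoffSum_pos (hf : MeasurePreserving f μ μ)
    (hg : Measurable g) (hgi : Integrable g μ) (h : ∀ᵐ x ∂μ, ∃ n, 0 < birkhoffSum f g n x) :
    0 ≤ ∫ x, g x ∂μ := by
  have hU : ∀ᵐ x ∂μ, x ∈ ⋃ n, {x | 0 < maxBirkhoffSum f g n x} := h.mono fun x ⟨n, hn⟩ =>
    mem_iUnion.2 ⟨n, hn.trans_le (birkhoffSum_le_maxBirkhoffSum n x)⟩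
  simpa [Measure.restrict_eq_self_of_ae_mem hU] using
    setIntegral_iUnion_nonneg_of_maxBirkhoffSum_pos hf hg hgi

end MaximalErgodic

section PointwiseErgodic

variable {α : Type*} {f : α → α} {g : α → ℝ} {C : ℝ}

theorem abs_birkhoffAverage_le (hC : ∀ x, |g x| ≤ C) (n : ℕ) (x : α) :
    |birkhoffAverage ℝ f g n x| ≤ C := by
  rcases n.eq_zero_or_pos with rfl | hn
  · simpa using (abs_nonneg _).trans (hC x)
  rw [birkhoffAverage, smul_eq_mul, abs_mul, abs_inv, Nat.abs_cast,
    inv_mul_le_iff₀ (Nat.cast_pos.2 hn)]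
  simpa [birkhoffSum] using
    (Finset.abs_sum_le_sum_abs (fun k => g (f^[k] x)) (Finset.range n)).trans
      (Finset.sum_le_sum fun k _ => hC (f^[k] x))

theorem limsup_birkhoffAverage_apply (hC : ∀ x, |g x| ≤ C) (x : α) :
    limsup (birkhoffAverage ℝ f g · (f x)) atTop = limsup (birkhoffAverage ℝ f g · x) atTop := by
  refine limsup_eq_limsup_of_tendsto_sub (abs_birkhoffAverage_le hC · _)
    (abs_birkhoffAverage_le hC · _) ?_
  refine tendsto_birkhoffAverage_apply_sub_birkhoffAverage' ℝ ?_ f x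
  exact (Metric.isBounded_Icc (-C) C).subset (range_subset_iff.2 fun y => abs_le.1 (hC y))

variable [MeasurableSpace α] {μ : Measure α} [IsProbabilityMeasure μ]

theorem ae_limsup_birkhoffAverage_le (hf : Ergodic f μ) (hg : Measurable g)
    (hC : ∀ x, |g x| ≤ C) :
    ∀ᵐ x ∂μ, limsup (birkhoffAverage ℝ f g · x) atTop ≤ ∫ x, g x ∂μ := by
  set L : α → ℝ := fun x => limsup (birkhoffAverage ℝ f g · x) atTop
  have hLm : Measurable L := Measurable.limsup fun n =>
    (measurable_birkhoffSum hf.measurable hg n).const_smul ((n : ℝ)⁻¹)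
  obtain ⟨c, hc⟩ := hf.ae_eq_const_of_ae_eq_comp_ae hLm.aestronglyMeasurable
    (ae_of_all _ fun x => limsup_birkhoffAverage_apply hC x)
  suffices c ≤ ∫ x, g x ∂μ from hc.mono fun x hx => hx.trans_le this
  refine forall_lt_imp_le_iff_le_of_dense.1 fun a ha => ?_
  have hpos : ∀ᵐ x ∂μ, ∃ n, 0 < birkhoffSum f (g - fun _ => a) n x := by
    filter_upwards [hc] with x hx
    have hbdd : IsCoboundedUnder (· ≤ ·) atTop (birkhoffAverage ℝ f g · x) :=
      isBoundedUnder_of ⟨-C, fun n => (abs_le.1 (abs_birkhoffAverage_le hC n x)).1⟩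
        |>.isCoboundedUnder_le
    have hxa : a < L x := by rw [hx]; exact ha
    obtain ⟨n, hn, han⟩ := (frequently_lt_of_lt_limsup hbdd hxa).forall_exists_of_atTop 1
    refine ⟨n, ?_⟩
    rw [birkhoffSum_sub, sub_pos]
    rw [birkhoffAverage, smul_eq_mul, lt_inv_mul_iff₀ (by positivity)] at han
    simpa [birkhoffSum, mul_comm] using han
  have hgi : Integrable g μ := .of_bound hg.aestronglyMeasurable C (ae_of_all _ hC)
  have := integral_nonneg_of_ae_exists_birkhoffSum_pos hf.toMeasurePreserving
    (hg.sub measurable_const) (hgi.sub (integrable_const a)) hpos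
  rw [integral_sub' hgi (integrable_const a)] at this
  simpa [sub_nonneg] using this

theorem Ergodic.ae_tendsto_birkhoffAverage (hf : Ergodic f μ) (hg : Measurable g)
    (hC : ∀ x, |g x| ≤ C) :
    ∀ᵐ x ∂μ, Tendsto (birkhoffAverage ℝ f g · x) atTop (𝓝 (∫ x, g x ∂μ)) := by
  have hC' : ∀ x, |(-g) x| ≤ C := by simpa using hC
  filter_upwards [ae_limsup_birkhoffAverage_le hf hg hC,
    ae_limsup_birkhoffAverage_le hf hg.neg hC'] with x hup hlow
  have bdd {h : α → ℝ} (hh : ∀ x, |h x| ≤ C) :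
      IsBoundedUnder (· ≤ ·) atTop (birkhoffAverage ℝ f h · x) :=
    isBoundedUnder_of ⟨C, fun n => (abs_le.1 (abs_birkhoffAverage_le hh n x)).2⟩
  refine tendsto_order.2 ⟨fun a ha => ?_, fun b hb => eventually_lt_of_limsup_lt
    (hup.trans_lt hb) (bdd hC)⟩
  have hlow' : limsup (birkhoffAverage ℝ f (-g) · x) atTop < -a := by
    rw [Pi.neg_def, integral_neg] at hlow
    exact hlow.trans_lt (neg_lt_neg ha)
  filter_upwards [eventually_lt_of_limsup_lt hlow' (bdd hC')] with n hn
  simpa [birkhoffAverage_neg] using hn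

end PointwiseErgodic

theorem tendsto_tsum_mul_abs_sub {β ι : Type*} {F : Filter β} {w : ι → ℝ} (hw : ∀ i, 0 ≤ w i)
    (hsum : Summable w) {u v : β → ι → ℝ} {a b : ι → ℝ} {C : ℝ}
    (huv : ∀ k i, |u k i - v k i| ≤ C) (hu : ∀ i, Tendsto (u · i) F (𝓝 (a i)))
    (hv : ∀ i, Tendsto (v · i) F (𝓝 (b i))) :
    Tendsto (fun k => ∑' i, w i * |u k i - v k i|) F (𝓝 (∑' i, w i * |a i - b i|)) := by
  refine tendsto_tsum_of_dominated_convergence (hsum.mul_right C)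
    (fun i => ((hu i).sub (hv i)).abs.const_mul (w i)) (Eventually.of_forall fun k i => ?_)
  rw [Real.norm_eq_abs, abs_mul, abs_abs, abs_of_nonneg (hw i)]
  exact mul_le_mul_of_nonneg_left (huv k i) (hw i)

theorem shift_iterate_apply (i : ℕ) (x : ℕ → ℝ) : shift^[i] x = fun j => x (j + i) := by
  induction i generalizing x with
  | zero => rfl
  | succ i ih =>
    rw [Function.iterate_succ_apply, ih]
    simp only [shift, Nat.add_assoc]

theorem Cylinder.measurableSet (C : Cylinder) : MeasurableSet C.set := by
  have : C.set = ⋂ j : Fin C.dim, (fun x : ℕ → ℝ => x j) ⁻¹' Icc (C.a j : ℝ) (C.b j) := by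
    ext x
    simp [Cylinder.set]
  rw [this]
  exact MeasurableSet.iInter fun j => measurable_pi_apply _ measurableSet_Icc

theorem nu_eq_birkhoffAverage {n l : ℕ} (hl : 1 ≤ l) (hn : l ≤ n) (X : ℕ → ℝ)
    (S : Set (ℕ → ℝ)) :
    nu n X l S = birkhoffAverage ℝ shift (S.indicator fun _ => 1) (n - l + 1) X := by
  rw [nu, if_pos ⟨hn, hl⟩, birkhoffAverage, birkhoffSum, smul_eq_mul, div_eq_inv_mul]
  simp only [shift_iterate_apply, Nat.add_comm, Nat.cast_add, Nat.cast_sub hn, Nat.cast_one]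

theorem abs_nu_le_one (n : ℕ) (X : ℕ → ℝ) (l : ℕ) (S : Set (ℕ → ℝ)) : |nu n X l S| ≤ 1 := by
  by_cases h : l ≤ n ∧ 1 ≤ l
  · rw [nu_eq_birkhoffAverage h.2 h.1]
    refine abs_birkhoffAverage_le (fun x => ?_) _ _
    by_cases hx : x ∈ S <;> simp [hx]
  · simp [nu, h]

theorem Ergodic.ae_tendsto_nu {μ : Measure (ℕ → ℝ)} [IsProbabilityMeasure μ]
    (hμ : Ergodic shift μ) {S : Set (ℕ → ℝ)} (hS : MeasurableSet S) {l : ℕ} (hl : 1 ≤ l) :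
    ∀ᵐ X ∂μ, Tendsto (fun n => nu n X l S) atTop (𝓝 (μ S).toReal) := by
  have hind : ∀ x, |S.indicator (fun _ => (1 : ℝ)) x| ≤ 1 := fun x => by
    by_cases hx : x ∈ S <;> simp [hx]
  filter_upwards [hμ.ae_tendsto_birkhoffAverage (measurable_const.indicator hS) hind] with X hX
  rw [integral_indicator_const _ hS, smul_eq_mul, mul_one, measureReal_def] at hX
  refine (hX.comp ((tendsto_add_atTop_nat 1).comp (tendsto_sub_atTop_nat l))).congr' ?_
  filter_upwards [eventually_ge_atTop l] with n hn
  exact (nu_eq_birkhoffAverage hl hn X S).symm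

theorem Ergodic.ae_forall_tendsto_nu {μ : Measure (ℕ → ℝ)} [IsProbabilityMeasure μ]
    (hμ : Ergodic shift μ) (B : ℕ → Cylinder) :
    ∀ᵐ X ∂μ, ∀ i, Tendsto (fun n => nu n X (B i).dim (B i).set) atTop
      (𝓝 (μ (B i).set).toReal) :=
  ae_all_iff.2 fun i => hμ.ae_tendsto_nu (B i).measurableSet (B i).dimPos

theorem tendsto_dhat {w : ℕ → ℝ} (hw : ∀ i, 0 ≤ w i) (hsum : Summable w) (B : ℕ → Cylinder)
    {μX μY : Measure (ℕ → ℝ)} {X Y : ℕ → ℝ}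
    (hX : ∀ i, Tendsto (fun n => nu n X (B i).dim (B i).set) atTop (𝓝 (μX (B i).set).toReal))
    (hY : ∀ i, Tendsto (fun m => nu m Y (B i).dim (B i).set) atTop (𝓝 (μY (B i).set).toReal)) :
    Tendsto (fun km : ℕ × ℕ => dhat w B km.1 X km.2 Y) (atTop ×ˢ atTop)
      (𝓝 (dd w B μX μY)) := by
  refine tendsto_tsum_mul_abs_sub hw hsum (C := 2) (fun km i => ?_)
    (fun i => (hX i).comp tendsto_fst) (fun i => (hY i).comp tendsto_snd)
  have := abs_nu_le_one km.1 X (B i).dim (B i).set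
  have := abs_nu_le_one km.2 Y (B i).dim (B i).set
  linarith [abs_sub (nu km.1 X (B i).dim (B i).set) (nu km.2 Y (B i).dim (B i).set)]

/-- If the empirical frequencies of each cylinder converge to the corresponding
probabilities, then the empirical distributional distance converges to the
distributional distance; in particular, for independent samples from stationary
ergodic processes this convergence holds almost surely. -/
theorem stmt5 (w : ℕ → ℝ) (hw : ∀ i, 0 < w i) (hsum : Summable w)
    (B : ℕ → Cylinder) (μX μY : Measure (ℕ → ℝ))
    [IsProbabilityMeasure μX] [IsProbabilityMeasure μY] :
    (∀ X Y : ℕ → ℝ,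
      (∀ i, Tendsto (fun n => nu n X (B i).dim (B i).set) atTop
          (𝓝 ((μX (B i).set).toReal))) →
      (∀ i, Tendsto (fun m => nu m Y (B i).dim (B i).set) atTop
          (𝓝 ((μY (B i).set).toReal))) →
      Tendsto (fun km : ℕ × ℕ => dhat w B km.1 X km.2 Y) (atTop ×ˢ atTop)
        (𝓝 (dd w B μX μY))) ∧
    (Ergodic shift μX → Ergodic shift μY →
      ∀ᵐ z ∂ μX.prod μY,
        Tendsto (fun km : ℕ × ℕ => dhat w B km.1 z.1 km.2 z.2) (atTop ×ˢ atTop)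
          (𝓝 (dd w B μX μY))) := by
  have hw' : ∀ i, 0 ≤ w i := fun i => (hw i).le
  refine ⟨fun X Y hX hY => tendsto_dhat hw' hsum B hX hY, fun hX hY => ?_⟩
  filter_upwards [measurePreserving_fst.quasiMeasurePreserving.ae (hX.ae_forall_tendsto_nu B),
    measurePreserving_snd.quasiMeasurePreserving.ae (hY.ae_forall_tendsto_nu B)] with z hz₁ hz₂
  exact tendsto_dhat hw' hsum B hz₁ hz₂
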